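/- Let F : ℝ⁴ → ℝ be smooth, let U ⊆ ℝ⁴ be open, and let g : U → ℝ be a smooth nowhere-vanishing function satisfying X_F(g) = (g/3)·∂₂F on U. Regard X_F as the vector field p = (t, x₀, x₁, x₂) ↦ (1, x₁, x₂, F(p)) on ℝ⁴, and let g·∂₂ denote the vector field p ↦ (0, 0, 0, g(p)). Then the iterated Lie bracket satisfies [X_F, [X_F, [X_F, g·∂₂]]] = −K₀ · (g·∂₂) + K₁ · [X_F, g·∂₂] at every point of U. -/

import Mathlib

/-- Partial derivative in the `i`-th coordinate direction on `ℝⁿ = (Fin n → ℝ)`. -/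
noncomputable def pd {n : ℕ} (i : Fin n) (f : (Fin n → ℝ) → ℝ) : (Fin n → ℝ) → ℝ :=
  fun x => fderiv ℝ f x (Pi.single i 1)

/-- Lie bracket of vector fields: `[X, Y](x) = DY(x)(X(x)) − DX(x)(Y(x))`. -/
noncomputable def lieBracket {n : ℕ} (X Y : (Fin n → ℝ) → (Fin n → ℝ)) :
    (Fin n → ℝ) → (Fin n → ℝ) :=
  fun x => fderiv ℝ Y x (X x) - fderiv ℝ X x (Y x)

/- Coordinates on `ℝ⁴` are `(t, x₀, x₁, x₂)`: `∂_t = pd 0`, `∂₀ = pd 1`, `∂₁ = pd 2`,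
`∂₂ = pd 3`, `x₁ = p 2`, `x₂ = p 3`. -/

/-- Total derivative `X_F = ∂_t + x₁·∂₀ + x₂·∂₁ + F·∂₂` (as a differential operator). -/
noncomputable def XF (F : (Fin 4 → ℝ) → ℝ) (u : (Fin 4 → ℝ) → ℝ) : (Fin 4 → ℝ) → ℝ :=
  fun p => pd 0 u p + p 2 * pd 1 u p + p 3 * pd 2 u p + F p * pd 3 u p

/-- `X_F` regarded as a vector field on `ℝ⁴`: `p ↦ (1, x₁, x₂, F(p))`. -/
noncomputable def XFvf (F : (Fin 4 → ℝ) → ℝ) : (Fin 4 → ℝ) → (Fin 4 → ℝ) :=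
  fun p => ![1, p 2, p 3, F p]

/-- The curvature `K₀`. -/
noncomputable def K0 (F : (Fin 4 → ℝ) → ℝ) : (Fin 4 → ℝ) → ℝ := fun p =>
  pd 1 F p - XF F (pd 2 F) p + (1/3) * pd 2 F p * pd 3 F p
    + (2/3) * XF F (XF F (pd 3 F)) p - (2/3) * XF F (pd 3 F) p * pd 3 F p
    + (2/27) * (pd 3 F p)^3

/-- The curvature `K₁ = ∂₁F − X_F(∂₂F) + (1/3)(∂₂F)²`. -/
noncomputable def K1 (F : (Fin 4 → ℝ) → ℝ) : (Fin 4 → ℝ) → ℝ := fun p =>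
  pd 2 F p - XF F (pd 3 F) p + (1/3) * (pd 3 F p)^2

section auxBR

lemma BR_vec_decomp (c : Fin 4 → ℝ) :
    c = c 0 • (Pi.single 0 1 : Fin 4 → ℝ) + c 1 • (Pi.single 1 1 : Fin 4 → ℝ)
      + c 2 • (Pi.single 2 1 : Fin 4 → ℝ) + c 3 • (Pi.single 3 1 : Fin 4 → ℝ) := by
  funext i
  fin_cases i <;> simp [Pi.single_apply]

lemma BR_clm_apply_vec (L : (Fin 4 → ℝ) →L[ℝ] ℝ) (c : Fin 4 → ℝ) :
    L c = c 0 * L (Pi.single 0 1) + c 1 * L (Pi.single 1 1)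
      + c 2 * L (Pi.single 2 1) + c 3 * L (Pi.single 3 1) := by
  conv_lhs => rw [BR_vec_decomp c]
  simp [map_add, map_smul]

lemma BR_fderiv_XFvf_eq (F u : (Fin 4 → ℝ) → ℝ) (p : Fin 4 → ℝ) :
    fderiv ℝ u p (XFvf F p) = XF F u p := by
  rw [BR_clm_apply_vec]
  simp [XFvf, XF, pd]

lemma BR_pd_contDiff {n : ℕ} (i : Fin n) {f : (Fin n → ℝ) → ℝ} (hf : ContDiff ℝ (⊤ : ℕ∞) f) :
    ContDiff ℝ (⊤ : ℕ∞) (pd i f) :=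
  (hf.fderiv_right (m := (⊤ : ℕ∞)) (by simp)).clm_apply contDiff_const

lemma BR_XF_contDiff {F u : (Fin 4 → ℝ) → ℝ} (hF : ContDiff ℝ (⊤ : ℕ∞) F) (hu : ContDiff ℝ (⊤ : ℕ∞) u) :
    ContDiff ℝ (⊤ : ℕ∞) (XF F u) := by
  unfold XF
  exact (((BR_pd_contDiff 0 hu).add (((contDiff_apply ℝ ℝ 2)).mul (BR_pd_contDiff 1 hu))).add
    ((contDiff_apply ℝ ℝ 3).mul (BR_pd_contDiff 2 hu))).add (hF.mul (BR_pd_contDiff 3 hu))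

lemma BR_fderiv_vec4 {y0 y1 y2 y3 : (Fin 4 → ℝ) → ℝ} {p : Fin 4 → ℝ}
    (h0 : DifferentiableAt ℝ y0 p) (h1 : DifferentiableAt ℝ y1 p)
    (h2 : DifferentiableAt ℝ y2 p) (h3 : DifferentiableAt ℝ y3 p) (v : Fin 4 → ℝ) :
    fderiv ℝ (fun q => ![y0 q, y1 q, y2 q, y3 q]) p v
      = ![fderiv ℝ y0 p v, fderiv ℝ y1 p v, fderiv ℝ y2 p v, fderiv ℝ y3 p v] := by
  have heq : (fun q => ![y0 q, y1 q, y2 q, y3 q])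
      = fun q (i : Fin 4) => (![y0, y1, y2, y3] i) q := by
    funext q i; fin_cases i <;> rfl
  have hdiff : ∀ i : Fin 4, DifferentiableAt ℝ (![y0, y1, y2, y3] i) p := by
    intro i; fin_cases i <;> assumption
  rw [heq, fderiv_pi hdiff]
  funext i
  fin_cases i <;> rfl

lemma BR_fderiv_proj (i : Fin 4) (p v : Fin 4 → ℝ) :
    fderiv ℝ (fun q : Fin 4 → ℝ => q i) p v = v i := by
  have : (fun q : Fin 4 → ℝ => q i) = (ContinuousLinearMap.proj i : (Fin 4 → ℝ) →L[ℝ] ℝ) := rfl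
  rw [this, ContinuousLinearMap.fderiv]; rfl

lemma BR_differentiableAt_proj (i : Fin 4) (p : Fin 4 → ℝ) :
    DifferentiableAt ℝ (fun q : Fin 4 → ℝ => q i) p :=
  (ContinuousLinearMap.proj i : (Fin 4 → ℝ) →L[ℝ] ℝ).differentiable.differentiableAt

lemma BR_fderiv_XFvf {F : (Fin 4 → ℝ) → ℝ} {p : Fin 4 → ℝ} (hF : DifferentiableAt ℝ F p)
    (v : Fin 4 → ℝ) :
    fderiv ℝ (XFvf F) p v = ![0, v 2, v 3, fderiv ℝ F p v] := by
  unfold XFvf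
  rw [BR_fderiv_vec4 (differentiableAt_const _) (BR_differentiableAt_proj 2 p)
    (BR_differentiableAt_proj 3 p) hF v]
  simp [BR_fderiv_proj]

set_option linter.unnecessarySeqFocus false in
lemma BR_bracket_formula {F : (Fin 4 → ℝ) → ℝ} {y0 y1 y2 y3 : (Fin 4 → ℝ) → ℝ} {p : Fin 4 → ℝ}
    (hF : DifferentiableAt ℝ F p)
    (h0 : DifferentiableAt ℝ y0 p) (h1 : DifferentiableAt ℝ y1 p)
    (h2 : DifferentiableAt ℝ y2 p) (h3 : DifferentiableAt ℝ y3 p) :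
    lieBracket (XFvf F) (fun q => ![y0 q, y1 q, y2 q, y3 q]) p
      = ![XF F y0 p, XF F y1 p - y2 p, XF F y2 p - y3 p,
          XF F y3 p - (y0 p * pd 0 F p + y1 p * pd 1 F p + y2 p * pd 2 F p + y3 p * pd 3 F p)] := by
  unfold lieBracket
  rw [BR_fderiv_vec4 h0 h1 h2 h3, BR_fderiv_XFvf hF]
  funext i
  fin_cases i <;>
    simp [BR_fderiv_XFvf_eq, Pi.sub_apply] <;>
    rw [BR_clm_apply_vec (fderiv ℝ F p)] <;> simp [pd]

lemma BR_lieBracket_congr {n : ℕ} {X Y Y' : (Fin n → ℝ) → (Fin n → ℝ)} {p : Fin n → ℝ}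
    (h : Y =ᶠ[nhds p] Y') : lieBracket X Y p = lieBracket X Y' p := by
  unfold lieBracket
  rw [h.fderiv_eq, h.eq_of_nhds]

variable {u v F : (Fin 4 → ℝ) → ℝ} {p : Fin 4 → ℝ} {c : ℝ}

lemma BR_pd_const (i : Fin 4) : pd i (fun _ : Fin 4 → ℝ => c) p = 0 := by simp [pd]

lemma BR_pd_sub (i : Fin 4) (hu : DifferentiableAt ℝ u p) (hv : DifferentiableAt ℝ v p) :
    pd i (fun q => u q - v q) p = pd i u p - pd i v p := by
  simp [pd, fderiv_fun_sub hu hv]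

lemma BR_pd_add (i : Fin 4) (hu : DifferentiableAt ℝ u p) (hv : DifferentiableAt ℝ v p) :
    pd i (fun q => u q + v q) p = pd i u p + pd i v p := by
  simp [pd, fderiv_fun_add hu hv]

lemma BR_pd_neg (i : Fin 4) : pd i (fun q => -(u q)) p = -pd i u p := by
  simp [pd, fderiv_neg]

lemma BR_pd_mul (i : Fin 4) (hu : DifferentiableAt ℝ u p) (hv : DifferentiableAt ℝ v p) :
    pd i (fun q => u q * v q) p = pd i u p * v p + u p * pd i v p := by
  simp [pd, fderiv_fun_mul hu hv]; ring

lemma BR_pd_const_mul (i : Fin 4) (hu : DifferentiableAt ℝ u p) :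
    pd i (fun q => c * u q) p = c * pd i u p := by
  simp [pd, fderiv_const_mul hu]

lemma BR_XF_const : XF F (fun _ => c) p = 0 := by simp [XF, BR_pd_const]

lemma BR_XF_add (hu : DifferentiableAt ℝ u p) (hv : DifferentiableAt ℝ v p) :
    XF F (fun q => u q + v q) p = XF F u p + XF F v p := by
  simp [XF, BR_pd_add _ hu hv]; ring

lemma BR_XF_sub (hu : DifferentiableAt ℝ u p) (hv : DifferentiableAt ℝ v p) :
    XF F (fun q => u q - v q) p = XF F u p - XF F v p := by
  simp [XF, BR_pd_sub _ hu hv]; ring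

lemma BR_XF_neg : XF F (fun q => -(u q)) p = -XF F u p := by
  simp [XF, BR_pd_neg]; ring

lemma BR_XF_mul (hu : DifferentiableAt ℝ u p) (hv : DifferentiableAt ℝ v p) :
    XF F (fun q => u q * v q) p = XF F u p * v p + u p * XF F v p := by
  simp [XF, BR_pd_mul _ hu hv]; ring

lemma BR_XF_const_mul (hu : DifferentiableAt ℝ u p) :
    XF F (fun q => c * u q) p = c * XF F u p := by
  simp [XF, BR_pd_const_mul _ hu]; ring

end auxBR

/-- first bracket closed form on `U` -/
noncomputable def G1 (F g : (Fin 4 → ℝ) → ℝ) : (Fin 4 → ℝ) → (Fin 4 → ℝ) :=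
  fun q => ![0, 0, -(g q), (-2/3) * (g q * pd 3 F q)]

/-- second bracket closed form on `U` -/
noncomputable def G2 (F g : (Fin 4 → ℝ) → ℝ) : (Fin 4 → ℝ) → (Fin 4 → ℝ) :=
  fun q => ![0, g q, (1/3) * (g q * pd 3 F q),
    g q * (pd 2 F q - (2/3) * XF F (pd 3 F) q + (4/9) * (pd 3 F q * pd 3 F q))]



/-- equation (eq_b) for `k = 2`: for a nowhere-vanishing solution `g`
of `X_F(g) = (g/3)·∂₂F`, the iterated Lie bracket satisfies
`[X_F, [X_F, [X_F, g·∂₂]]] = −K₀·(g·∂₂) + K₁·[X_F, g·∂₂]` on `U`. -/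
theorem bracket_relation_order3 (F : (Fin 4 → ℝ) → ℝ) (hF : ContDiff ℝ (⊤ : ℕ∞) F)
    (U : Set (Fin 4 → ℝ)) (hU : IsOpen U)
    (g : (Fin 4 → ℝ) → ℝ) (hg : ContDiffOn ℝ (⊤ : ℕ∞) g U)
    (hg0 : ∀ p ∈ U, g p ≠ 0)
    (hgeq : ∀ p ∈ U, XF F g p = (g p / 3) * pd 3 F p) :
    ∀ p ∈ U,
      lieBracket (XFvf F) (lieBracket (XFvf F)
          (lieBracket (XFvf F) (fun q => ![0, 0, 0, g q]))) p
        = (-(K0 F p)) • (![0, 0, 0, g p] : Fin 4 → ℝ)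
          + (K1 F p) • lieBracket (XFvf F) (fun q => ![0, 0, 0, g q]) p := by
  have hFd : ∀ q, DifferentiableAt ℝ F q := fun q => hF.differentiable (by simp) q
  have ha : ContDiff ℝ (⊤ : ℕ∞) (pd 3 F) := BR_pd_contDiff 3 hF
  have hb : ContDiff ℝ (⊤ : ℕ∞) (pd 2 F) := BR_pd_contDiff 2 hF
  have hXa : ContDiff ℝ (⊤ : ℕ∞) (XF F (pd 3 F)) := BR_XF_contDiff hF ha
  have had : ∀ q, DifferentiableAt ℝ (pd 3 F) q := fun q => ha.differentiable (by simp) q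
  have hbd : ∀ q, DifferentiableAt ℝ (pd 2 F) q := fun q => hb.differentiable (by simp) q
  have hXad : ∀ q, DifferentiableAt ℝ (XF F (pd 3 F)) q := fun q => hXa.differentiable (by simp) q
  have hgd : ∀ q ∈ U, DifferentiableAt ℝ g q := fun q hq =>
    (hg.contDiffAt (hU.mem_nhds hq)).differentiableAt (by simp)
  -- step 1
  have step1 : ∀ q ∈ U, lieBracket (XFvf F) (fun r => ![0, 0, 0, g r]) q = G1 F g q := by
    intro q hq
    rw [BR_bracket_formula (hFd q) (differentiableAt_const 0) (differentiableAt_const 0)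
      (differentiableAt_const 0) (hgd q hq)]
    funext i
    fin_cases i <;>
      simp [G1, BR_XF_const] <;>
      · rw [hgeq q hq]; ring
  -- step 2
  have step2 : ∀ q ∈ U, lieBracket (XFvf F) (G1 F g) q = G2 F g q := by
    intro q hq
    unfold G1
    rw [BR_bracket_formula (hFd q) (differentiableAt_const 0) (differentiableAt_const 0)
      ((hgd q hq).fun_neg) (((hgd q hq).fun_mul (had q)).const_mul _)]
    have hXga : XF F (fun r => g r * pd 3 F r) q = XF F g q * pd 3 F q + g q * XF F (pd 3 F) q :=
      BR_XF_mul (hgd q hq) (had q)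
    funext i
    fin_cases i <;>
      simp [G2, BR_XF_const, BR_XF_neg, BR_XF_const_mul ((hgd q hq).fun_mul (had q)), hXga] <;>
      · rw [hgeq q hq]; ring
  -- step 3
  have step3 : ∀ q ∈ U, lieBracket (XFvf F) (G2 F g) q
      = fun i => ![(0:ℝ), 0, -(K1 F q) * g q,
          (-(K0 F q)) * g q + (K1 F q) * ((-2/3) * (g q * pd 3 F q))] i := by
    intro q hq
    unfold G2
    have hsd : ∀ r, DifferentiableAt ℝ
        (fun r => pd 2 F r - (2/3) * XF F (pd 3 F) r + (4/9) * (pd 3 F r * pd 3 F r)) r :=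
      fun r => (((hbd r).sub ((hXad r).const_mul _)).add (((had r).mul (had r)).const_mul _))
    rw [BR_bracket_formula (hFd q) (differentiableAt_const 0) (hgd q hq)
      (((hgd q hq).fun_mul (had q)).const_mul _) ((hgd q hq).fun_mul (hsd q))]
    have hXga : XF F (fun r => g r * pd 3 F r) q = XF F g q * pd 3 F q + g q * XF F (pd 3 F) q :=
      BR_XF_mul (hgd q hq) (had q)
    have hXaa : XF F (fun r => pd 3 F r * pd 3 F r) q
        = XF F (pd 3 F) q * pd 3 F q + pd 3 F q * XF F (pd 3 F) q := BR_XF_mul (had q) (had q)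
    have hXs : XF F (fun r => pd 2 F r - (2/3) * XF F (pd 3 F) r + (4/9) * (pd 3 F r * pd 3 F r)) q
        = (XF F (pd 2 F) q - (2/3) * XF F (XF F (pd 3 F)) q)
          + (4/9) * (XF F (pd 3 F) q * pd 3 F q + pd 3 F q * XF F (pd 3 F) q) := by
      rw [BR_XF_add ((hbd q).fun_sub ((hXad q).const_mul _)) (((had q).fun_mul (had q)).const_mul _),
        BR_XF_sub (hbd q) ((hXad q).const_mul _), BR_XF_const_mul (hXad q),
        BR_XF_const_mul ((had q).fun_mul (had q)), hXaa]
    have hXgs : XF F (fun r => g r *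
        (pd 2 F r - (2/3) * XF F (pd 3 F) r + (4/9) * (pd 3 F r * pd 3 F r))) q
        = XF F g q * (pd 2 F q - (2/3) * XF F (pd 3 F) q + (4/9) * (pd 3 F q * pd 3 F q))
          + g q * ((XF F (pd 2 F) q - (2/3) * XF F (XF F (pd 3 F)) q)
            + (4/9) * (XF F (pd 3 F) q * pd 3 F q + pd 3 F q * XF F (pd 3 F) q)) := by
      rw [BR_XF_mul (hgd q hq) (hsd q), hXs]
    funext i
    fin_cases i <;>
      simp [K0, K1, BR_XF_const, BR_XF_const_mul ((hgd q hq).fun_mul (had q)), hXga, hXgs] <;>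
      · rw [hgeq q hq]; ring
  -- assemble
  intro p hp
  have hmem := hU.mem_nhds hp
  have hev1 : ∀ q ∈ U, lieBracket (XFvf F) (lieBracket (XFvf F) (fun r => ![0, 0, 0, g r])) q
      = G2 F g q := by
    intro q hq
    have : lieBracket (XFvf F) (fun r => ![(0:ℝ), 0, 0, g r]) =ᶠ[nhds q] G1 F g :=
      Filter.eventuallyEq_of_mem (hU.mem_nhds hq) step1
    rw [BR_lieBracket_congr this, step2 q hq]
  have hev2 : lieBracket (XFvf F) (lieBracket (XFvf F) (fun r => ![(0:ℝ), 0, 0, g r]))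
      =ᶠ[nhds p] G2 F g := Filter.eventuallyEq_of_mem hmem hev1
  rw [BR_lieBracket_congr hev2, step3 p hp, step1 p hp]
  funext i
  fin_cases i <;> simp [G1] <;> ring
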